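/- arXiv:2105.00879 — 2 statements merged into one kernel-verified Lean document; each statement's English description precedes it below -/
import Mathlib

section
/- Let T ≥ 1 and m = (m_0,…,m_T) ∈ M_T with H̲_T(m) · H̄_T(m) = 0, and let T' := min{t ≤ T : H̲_t(m) · H̄_t(m) = 0}. Let q := q̲_T(m) = q̄_T(m). Then: if H̲_{T'}(m) = 0, q is the unique real solution of H̲_{T'}(m_{T−T'+1},…,m_T, q) = 0; and if H̄_{T'}(m) = 0, q is the unique real solution of H̄_{T'}(m_{T−T'+1},…,m_T, q) = 0. -/
open MeasureTheory

/-- `μ` is a Borel probability measure on `[0,1]` (viewed as a measure on `ℝ` giving no mass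
to the complement of `[0,1]`) whose first `T+1` raw moments are `m_0, …, m_T`. -/
def IsMomentSeq (T : ℕ) (μ : Measure ℝ) (m : Fin (T + 1) → ℝ) : Prop :=
  IsProbabilityMeasure μ ∧ μ (Set.Icc (0 : ℝ) 1)ᶜ = 0 ∧
    ∀ t : Fin (T + 1), m t = ∫ u, u ^ (t : ℕ) ∂μ

/-- The moment space `M_T ⊆ ℝ^{T+1}`: vectors of the first `T+1` raw moments of Borel
probability measures on `[0,1]`. -/
def momSpace (T : ℕ) : Set (Fin (T + 1) → ℝ) :=
  {m | ∃ μ : Measure ℝ, IsMomentSeq T μ m}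

/-- `D(m)`: the set of Borel probability measures on `[0,1]` with raw moments `m_0, …, m_T`. -/
def Dset (T : ℕ) (m : Fin (T + 1) → ℝ) : Set (Measure ℝ) :=
  {μ | IsMomentSeq T μ m}

/-- `q̲_T(m) = inf_{μ ∈ D(m)} ∫ u^{T+1} dμ(u)`. -/
noncomputable def qlow (T : ℕ) (m : Fin (T + 1) → ℝ) : ℝ :=
  sInf ((fun μ : Measure ℝ => ∫ u, u ^ (T + 1) ∂μ) '' Dset T m)

/-- `q̄_T(m) = sup_{μ ∈ D(m)} ∫ u^{T+1} dμ(u)`. -/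
noncomputable def qup (T : ℕ) (m : Fin (T + 1) → ℝ) : ℝ :=
  sSup ((fun μ : Measure ℝ => ∫ u, u ^ (T + 1) ∂μ) '' Dset T m)

/-- Extension of a finite vector to `ℕ → ℝ` (junk value `0` outside the range). -/
def toFun {n : ℕ} (m : Fin n → ℝ) : ℕ → ℝ :=
  fun k => if h : k < n then m ⟨k, h⟩ else 0

/-- The lower Hankel determinant `H̲_t(m)` (with `0`-based indexing of `m`):
for `t` even, `det[(m_{i+j})_{0 ≤ i,j ≤ t/2}]`; for `t` odd,
`det[(m_{i+j+1})_{0 ≤ i,j ≤ (t+1)/2 - 1}]`. -/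
noncomputable def Hlow (t : ℕ) (m : ℕ → ℝ) : ℝ :=
  if t % 2 = 0 then
    Matrix.det (Matrix.of fun i j : Fin (t / 2 + 1) => m (i.val + j.val))
  else
    Matrix.det (Matrix.of fun i j : Fin ((t + 1) / 2) => m (i.val + j.val + 1))

/-- The upper Hankel determinant `H̄_t(m)` (with `0`-based indexing of `m`):
for `t` even, `det[(m_{i+j+1} - m_{i+j+2})_{0 ≤ i,j ≤ t/2 - 1}]`; for `t` odd,
`det[(m_{i+j} - m_{i+j+1})_{0 ≤ i,j ≤ (t+1)/2 - 1}]`. -/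
noncomputable def Hup (t : ℕ) (m : ℕ → ℝ) : ℝ :=
  if t % 2 = 0 then
    Matrix.det (Matrix.of fun i j : Fin (t / 2) => m (i.val + j.val + 1) - m (i.val + j.val + 2))
  else
    Matrix.det (Matrix.of fun i j : Fin ((t + 1) / 2) => m (i.val + j.val) - m (i.val + j.val + 1))

/-!
If a localizing Hankel determinant of `m` (for the weight `u ^ a * (1 - u) ^ b`) vanishes, a
kernel vector `v` gives a nonzero polynomial `p` with `∫ u ^ a (1 - u) ^ b p(u) ^ 2 dν = 0` for
every `ν ∈ D(m)`. Hence every such `ν` is carried by the finite set of zeros of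
`u ^ a (1 - u) ^ b p(u)` in `[0, 1]`, which has at most `T + 1` points, so its weights are fixed
by `m` through a Vandermonde system: all of `D(m)` has the same `(T + 1)`-st moment `q`.

For the shifted sequence `(m_{T-T'+1}, …, m_T, q')`, the Hankel matrix agrees with that of the
discrete measure `u ^ (T - T' + 1) dμ` except in the corner entry, where `q'` replaces `q`. The
latter matrix is singular, while its leading minor is not: its number of atoms is exactly the
size of that minor, bounded above by the degree of `p` and below by the nonvanishing of the
determinant of order `T' - 1`. So the determinant is an affine function of `q'` with nonzero slope
that vanishes at `q`.
-/

open Polynomial Finset Matrix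

def hankel {R : Type*} (f : ℕ → R) (n : ℕ) : Matrix (Fin n) (Fin n) R :=
  Matrix.of fun i j => f (i + j)

theorem det_sub_det_of_eq_off_corner {R : Type*} [CommRing R] {n : ℕ}
    {A B : Matrix (Fin (n + 1)) (Fin (n + 1)) R}
    (h : ∀ i j, i ≠ Fin.last n ∨ j ≠ Fin.last n → A i j = B i j) :
    A.det - B.det =
      (A (Fin.last n) (Fin.last n) - B (Fin.last n) (Fin.last n)) *
        (B.submatrix Fin.castSucc Fin.castSucc).det := by
  have hminor : ∀ j : Fin (n + 1), A.submatrix (Fin.last n).succAbove j.succAbove =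
      B.submatrix (Fin.last n).succAbove j.succAbove := fun j => by
    ext i k
    exact h _ _ (.inl (Fin.succAbove_ne _ _))
  rw [det_succ_row A (Fin.last n), det_succ_row B (Fin.last n), ← sum_sub_distrib,
    sum_eq_single (Fin.last n)]
  · rw [hminor, Fin.succAbove_last, Fin.val_last, ← two_mul, pow_mul]
    simp only [neg_one_sq, one_pow, one_mul]
    ring
  · intro j _ hj
    rw [hminor, h _ _ (.inr hj), sub_self]
  · simp

theorem eqOn_of_sum_mul_pow_eq {R : Type*} [CommRing R] [IsDomain R] {S : Finset R}
    {w w' : R → R} (h : ∀ j < #S, ∑ z ∈ S, w z * z ^ j = ∑ z ∈ S, w' z * z ^ j) :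
    Set.EqOn w w' S := by
  intro z hz
  set e := S.equivFin.symm
  have hsum : ∀ g : R → R, ∑ i, g (e i) = ∑ z ∈ S, g z := fun g =>
    (e.sum_comp fun x : S => g x).trans (S.sum_coe_sort g)
  have hzero := Matrix.eq_zero_of_forall_pow_sum_mul_pow_eq_zero (f := fun i => (e i : R))
    (v := fun i => w (e i) - w' (e i)) (Subtype.val_injective.comp e.injective) fun i => by
      rw [hsum fun z => (w z - w' z) * z ^ (i : ℕ)]
      simp only [sub_mul, sum_sub_distrib, h i i.2, sub_self]
  simpa [sub_eq_zero] using congrFun hzero (e.symm ⟨z, hz⟩)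

section DiscreteHankel

variable {K : Type*} [Field K] [DecidableEq K] {S : Finset K} {c : K → K} {n : ℕ}

theorem eval_ofFn (v : Fin n → K) (z : K) :
    (ofFn n v).eval z = ∑ i, v i * z ^ (i : ℕ) := by
  simp [ofFn_eq_sum_monomial, eval_finsetSum]

theorem hankel_sum_mulVec_apply (v : Fin n → K) (j : Fin n) :
    (hankel (fun k => ∑ z ∈ S, c z * z ^ k) n *ᵥ v) j =
      ∑ z ∈ S, c z * z ^ (j : ℕ) * (ofFn n v).eval z := by
  simp only [mulVec, dotProduct, hankel, of_apply, eval_ofFn, sum_mul, mul_sum]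
  rw [sum_comm]
  refine sum_congr rfl fun z _ => sum_congr rfl fun i _ => ?_
  ring

theorem dotProduct_hankel_sum_mulVec (v : Fin n → K) :
    v ⬝ᵥ (hankel (fun k => ∑ z ∈ S, c z * z ^ k) n *ᵥ v) =
      ∑ z ∈ S, c z * (ofFn n v).eval z ^ 2 := by
  simp only [dotProduct, hankel_sum_mulVec_apply, mul_sum]
  rw [sum_comm]
  refine sum_congr rfl fun z _ => ?_
  rw [sq, eval_ofFn, mul_sum, mul_sum]
  refine sum_congr rfl fun i _ => ?_
  ring

theorem det_hankel_sum_eq_zero (h : #{z ∈ S | c z ≠ 0} < n) :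
    (hankel (fun k => ∑ z ∈ S, c z * z ^ k) n).det = 0 := by
  set P : K[X] := ∏ z ∈ S with c z ≠ 0, (X - C z)
  have hP : P.Monic := monic_prod_of_monic _ _ fun z _ => monic_X_sub_C z
  have hdeg : P.natDegree < n := by
    rwa [natDegree_prod_of_monic _ _ fun z _ => monic_X_sub_C z, sum_congr rfl
      fun z _ => natDegree_X_sub_C z, sum_const, smul_eq_mul, mul_one]
  have hofFn : ofFn n (toFn n P) = P := ofFn_comp_toFn_eq_id_of_natDegree_lt hdeg
  refine exists_mulVec_eq_zero_iff.1 ⟨toFn n P, fun h0 => hP.ne_zero ?_, funext fun j => ?_⟩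
  · rw [← hofFn, h0, map_zero]
  · rw [hankel_sum_mulVec_apply, hofFn, Pi.zero_apply]
    refine sum_eq_zero fun z hz => ?_
    by_cases hcz : c z = 0
    · simp [hcz]
    · have hzP : P.eval z = 0 := by
        simpa [P, eval_prod] using prod_eq_zero (mem_filter.2 ⟨hz, hcz⟩) (sub_self z)
      rw [hzP, mul_zero]

theorem det_hankel_sum_ne_zero [LinearOrder K] [IsStrictOrderedRing K] (hc : ∀ z ∈ S, 0 ≤ c z)
    (h : n ≤ #{z ∈ S | c z ≠ 0}) : (hankel (fun k => ∑ z ∈ S, c z * z ^ k) n).det ≠ 0 := by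
  intro hdet
  obtain ⟨v, hv, hmv⟩ := exists_mulVec_eq_zero_iff.2 hdet
  have hterm : ∀ z ∈ S, c z * (ofFn n v).eval z ^ 2 = 0 :=
    (sum_eq_zero_iff_of_nonneg fun z hz => mul_nonneg (hc z hz) (sq_nonneg _)).1
      (by rw [← dotProduct_hankel_sum_mulVec, hmv, dotProduct_zero])
  have hroot : ∀ z ∈ {z ∈ S | c z ≠ 0}, (ofFn n v).eval z = 0 := fun z hz => by
    obtain ⟨hzS, hcz⟩ := mem_filter.1 hz
    simpa [hcz] using hterm z hzS
  rcases Nat.eq_zero_or_pos n with rfl | hn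
  · exact hv (Subsingleton.elim _ _)
  refine hv (injective_ofFn n ?_)
  rw [map_zero]
  exact eq_zero_of_natDegree_lt_card_of_eval_eq_zero' _ _ hroot
    ((ofFn_natDegree_lt hn v).trans_le h)

end DiscreteHankel

def weight (a : ℕ) (b : Bool) (u : ℝ) : ℝ := u ^ a * (1 - u) ^ b.toNat

def weightedMoments (f : ℕ → ℝ) (a : ℕ) (b : Bool) (k : ℕ) : ℝ :=
  if b then f (a + k) - f (a + k + 1) else f (a + k)

theorem weight_nonneg {a : ℕ} {b : Bool} {u : ℝ} (hu : u ∈ Set.Icc (0 : ℝ) 1) :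
    0 ≤ weight a b u :=
  mul_nonneg (pow_nonneg hu.1 a) (pow_nonneg (sub_nonneg.2 hu.2) _)

theorem eq_zero_or_eq_one_of_weight_eq_zero {a : ℕ} {b : Bool} {u : ℝ} (h : weight a b u = 0) :
    u = 0 ∨ u = 1 := by
  rcases mul_eq_zero.1 h with h | h
  · exact .inl (pow_eq_zero_iff'.1 h).1
  · exact .inr (sub_eq_zero.1 (pow_eq_zero_iff'.1 h).1).symm

theorem continuous_weight (a : ℕ) (b : Bool) : Continuous (weight a b) := by
  unfold weight
  fun_prop

theorem card_filter_weight_le (S : Finset ℝ) (w : ℝ → ℝ) {a a' s : ℕ} (b : Bool) (hs : s ≠ 0) :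
    #{z ∈ S | w z * weight a' b z ≠ 0} ≤ #{z ∈ S | w z * z ^ s * weight a b z ≠ 0} + (1 - a') := by
  have hsub : ∀ z ∈ S, z ≠ 0 → w z * weight a' b z ≠ 0 → w z * z ^ s * weight a b z ≠ 0 := by
    intro z _ hz hne
    simp_all [weight]
  rcases Nat.eq_zero_or_pos a' with rfl | ha'
  · refine (card_le_card fun z hz => ?_).trans (card_insert_le 0 _)
    obtain ⟨hzS, hne⟩ := mem_filter.1 hz
    rcases eq_or_ne z 0 with rfl | hz0
    · exact mem_insert_self _ _
    · exact mem_insert_of_mem (mem_filter.2 ⟨hzS, hsub z hzS hz0 hne⟩)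
  · refine (card_le_card fun z hz => ?_).trans (Nat.le_add_right _ _)
    obtain ⟨hzS, hne⟩ := mem_filter.1 hz
    have hz0 : z ≠ 0 := by rintro rfl; simp [weight, zero_pow ha'.ne'] at hne
    exact mem_filter.2 ⟨hzS, hsub z hzS hz0 hne⟩

section WeightedMoments

variable {S : Finset ℝ} {c : ℝ → ℝ} {f g : ℕ → ℝ} {a n : ℕ} {b : Bool}

theorem weightedMoments_sum :
    weightedMoments (fun k => ∑ z ∈ S, c z * z ^ k) a b =
      fun k => ∑ z ∈ S, c z * weight a b z * z ^ k := by
  funext k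
  cases b
  · refine sum_congr rfl fun z _ => ?_
    simp only [weight, Bool.toNat_false, pow_zero, pow_add]
    ring
  · simp only [weightedMoments, if_true, ← sum_sub_distrib]
    refine sum_congr rfl fun z _ => ?_
    simp only [weight, Bool.toNat_true, pow_one, pow_add]
    ring

theorem weightedMoments_congr {k : ℕ} (h : ∀ k' ≤ a + k + b.toNat, f k' = g k') :
    weightedMoments f a b k = weightedMoments g a b k := by
  cases b
  · exact h _ (by simp)
  · simp only [weightedMoments, if_true, Bool.toNat_true] at h ⊢
    rw [h _ (by omega), h _ le_rfl]

theorem hankel_weightedMoments_congr (h : ∀ k, k + 2 ≤ a + 2 * n + b.toNat → f k = g k) :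
    hankel (weightedMoments f a b) n = hankel (weightedMoments g a b) n := by
  ext i j
  exact weightedMoments_congr fun k hk => h k (by omega)

theorem det_hankel_weightedMoments_eq_zero_iff
    (hg : ∀ k < a + 2 * n + b.toNat, g k = ∑ z ∈ S, c z * z ^ k)
    (hc : ∀ z ∈ S, 0 ≤ c z * weight a b z) (hcard : #{z ∈ S | c z * weight a b z ≠ 0} = n) :
    (hankel (weightedMoments g a b) (n + 1)).det = 0 ↔
      g (a + 2 * n + b.toNat) = ∑ z ∈ S, c z * z ^ (a + 2 * n + b.toNat) := by
  set B := hankel (weightedMoments (fun k => ∑ z ∈ S, c z * z ^ k) a b) (n + 1) with hB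
  rw [weightedMoments_sum] at hB
  have hdiff := det_sub_det_of_eq_off_corner (A := hankel (weightedMoments g a b) (n + 1))
    (B := B) fun i j hij => weightedMoments_congr fun k hk => hg k (by
      have := Fin.val_last n
      rcases hij with hi | hj
      · have := Fin.val_lt_last hi; omega
      · have := Fin.val_lt_last hj; omega)
  have hBdet : B.det = 0 := hB ▸ det_hankel_sum_eq_zero (by omega)
  have hminor : (B.submatrix Fin.castSucc Fin.castSucc).det ≠ 0 := by
    have : B.submatrix Fin.castSucc Fin.castSucc =
        hankel (fun k => ∑ z ∈ S, c z * weight a b z * z ^ k) n := by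
      rw [hB]; rfl
    rw [this]
    exact det_hankel_sum_ne_zero hc hcard.ge
  rw [hBdet, sub_zero] at hdiff
  rw [hdiff, mul_eq_zero, or_iff_left hminor, sub_eq_zero]
  simp only [B, hankel, of_apply, Fin.val_last, weightedMoments]
  cases b
  · simp [two_mul]
  · simp only [if_true, Bool.toNat_true]
    rw [← two_mul, hg _ (by simp), sub_right_inj]

end WeightedMoments

/-- The Hankel determinant of order `n + 1` of the moments of `u ^ a * (1 - u) ^ b * dμ(u)`,
where `a ≤ 1` and `a + 2 * n + b = t`. -/
noncomputable def hankelDet (b : Bool) (t : ℕ) (f : ℕ → ℝ) : ℝ :=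
  (hankel (weightedMoments f ((t - b.toNat) % 2) b) ((t - b.toNat) / 2 + 1)).det

theorem Hlow_eq_hankelDet (t : ℕ) (f : ℕ → ℝ) : Hlow t f = hankelDet false t f := by
  obtain ⟨k, rfl | rfl⟩ := Nat.even_or_odd' t
  · simp [Hlow, hankelDet, hankel, weightedMoments]
  · rw [Hlow, hankelDet, if_neg (by omega), Bool.toNat_false, Nat.sub_zero,
      show (2 * k + 1 + 1) / 2 = k + 1 by omega, show (2 * k + 1) / 2 = k by omega]
    simp [hankel, weightedMoments, add_comm]

theorem Hup_eq_hankelDet {t : ℕ} (ht : 1 ≤ t) (f : ℕ → ℝ) : Hup t f = hankelDet true t f := by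
  obtain ⟨k, rfl | rfl⟩ := Nat.even_or_odd' t
  · rw [Hup, hankelDet, if_pos (by omega), Bool.toNat_true, show 2 * k / 2 = k - 1 + 1 by omega,
      show (2 * k - 1) / 2 = k - 1 by omega]
    simp [hankel, weightedMoments, show (2 * k - 1) % 2 = 1 by omega, add_comm, add_left_comm]
  · rw [Hup, hankelDet, if_neg (by omega), Bool.toNat_true, Nat.add_sub_cancel,
      show (2 * k + 1 + 1) / 2 = k + 1 by omega, show 2 * k / 2 = k by omega]
    simp [hankel, weightedMoments, add_comm]

theorem integral_eq_sum_of_ae_mem {X : Type*} [MeasurableSpace X] [MeasurableSingletonClass X]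
    {ν : Measure X} {S : Finset X} (hS : ∀ᵐ x ∂ν, x ∈ S) {f : X → ℝ} (hf : Integrable f ν) :
    ∫ x, f x ∂ν = ∑ z ∈ S, ν.real {z} * f z := by
  have hres : ν.restrict S = ν := Measure.restrict_eq_self_of_ae_mem hS
  have hfS : IntegrableOn f S ν := by rwa [IntegrableOn, hres]
  have := setIntegral_finset S hfS
  rwa [hres] at this

namespace IsMomentSeq

variable {T : ℕ} {m : Fin (T + 1) → ℝ} {μ ν : Measure ℝ} {a n : ℕ} {b : Bool}

theorem ae_mem_Icc (hν : IsMomentSeq T ν m) : ∀ᵐ u ∂ν, u ∈ Set.Icc (0 : ℝ) 1 :=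
  ae_iff.2 hν.2.1

theorem integrable_of_continuous (hν : IsMomentSeq T ν m) {f : ℝ → ℝ} (hf : Continuous f) :
    Integrable f ν := by
  have := hν.1
  obtain ⟨C, hC⟩ := isCompact_Icc.exists_bound_of_continuousOn hf.continuousOn
  exact Integrable.mono' (integrable_const C) hf.aestronglyMeasurable
    (hν.ae_mem_Icc.mono fun u hu => hC u hu)

theorem integral_pow (hν : IsMomentSeq T ν m) {k : ℕ} (hk : k ≤ T) :
    ∫ u, u ^ k ∂ν = toFun m k := by
  rw [toFun, dif_pos (by omega)]
  exact (hν.2.2 ⟨k, by omega⟩).symm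

theorem integral_weight_mul_pow (hν : IsMomentSeq T ν m) {k : ℕ} (h : a + k + b.toNat ≤ T) :
    ∫ u, weight a b u * u ^ k ∂ν = weightedMoments (toFun m) a b k := by
  cases b
  · simp only [weight, Bool.toNat_false, pow_zero, mul_one, ← pow_add] at h ⊢
    exact hν.integral_pow h
  · have hsplit : ∀ u : ℝ, weight a true u * u ^ k = u ^ (a + k) - u ^ (a + k + 1) := fun u => by
      simp only [weight, Bool.toNat_true, pow_one, pow_add]
      ring
    simp only [Bool.toNat_true] at h
    simp only [hsplit, weightedMoments, if_true]
    rw [integral_sub (hν.integrable_of_continuous (by fun_prop))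
      (hν.integrable_of_continuous (by fun_prop)), hν.integral_pow (by omega),
      hν.integral_pow h]

theorem integral_weight_mul_eval_sq (hν : IsMomentSeq T ν m) (h : a + 2 * n + b.toNat ≤ T)
    (v : Fin (n + 1) → ℝ) :
    ∫ u, weight a b u * (ofFn (n + 1) v).eval u ^ 2 ∂ν =
      v ⬝ᵥ (hankel (weightedMoments (toFun m) a b) (n + 1) *ᵥ v) := by
  have hexpand : ∀ u, weight a b u * (ofFn (n + 1) v).eval u ^ 2 =
      ∑ i, ∑ j, v i * v j * (weight a b u * u ^ ((i : ℕ) + j)) := fun u => by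
    rw [eval_ofFn, sq, sum_mul_sum, mul_sum]
    refine sum_congr rfl fun i _ => ?_
    rw [mul_sum]
    exact sum_congr rfl fun j _ => by rw [pow_add]; ring
  have hint : ∀ k : ℕ, Integrable (fun u => weight a b u * u ^ k) ν := fun k =>
    hν.integrable_of_continuous (by have := continuous_weight a b; fun_prop)
  simp only [hexpand, dotProduct, mulVec, hankel, of_apply, mul_sum]
  rw [integral_finsetSum _ fun i _ => integrable_finsetSum _ fun j _ => (hint _).const_mul _]
  refine sum_congr rfl fun i _ => ?_
  rw [integral_finsetSum _ fun j _ => (hint _).const_mul _]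
  refine sum_congr rfl fun j _ => ?_
  rw [integral_const_mul, hν.integral_weight_mul_pow (by omega)]
  ring

theorem ae_weight_mul_eval_eq_zero (hν : IsMomentSeq T ν m) (h : a + 2 * n + b.toNat ≤ T)
    {v : Fin (n + 1) → ℝ} (hv : hankel (weightedMoments (toFun m) a b) (n + 1) *ᵥ v = 0) :
    ∀ᵐ u ∂ν, weight a b u * (ofFn (n + 1) v).eval u = 0 := by
  have hnonneg : 0 ≤ᵐ[ν] fun u => weight a b u * (ofFn (n + 1) v).eval u ^ 2 :=
    hν.ae_mem_Icc.mono fun u hu => mul_nonneg (weight_nonneg hu) (sq_nonneg _)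
  have hzero := (integral_eq_zero_iff_of_nonneg_ae hnonneg (hν.integrable_of_continuous
    (by have := continuous_weight a b; fun_prop))).1
    (by rw [hν.integral_weight_mul_eval_sq h, hv, dotProduct_zero])
  filter_upwards [hzero] with u hu
  simpa using hu

theorem exists_finset_integral_pow_eq (hT : 1 ≤ T) (hμ : IsMomentSeq T μ m)
    (h : a + 2 * n + b.toNat ≤ T)
    (hdet : (hankel (weightedMoments (toFun m) a b) (n + 1)).det = 0) :
    ∃ S : Finset ℝ, (∀ z ∈ S, z ∈ Set.Icc (0 : ℝ) 1) ∧
      #{z ∈ S | μ.real {z} * weight a b z ≠ 0} ≤ n ∧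
      ∀ ν, IsMomentSeq T ν m → ∀ j, ∫ u, u ^ j ∂ν = ∑ z ∈ S, μ.real {z} * z ^ j := by
  obtain ⟨v, hv, hHv⟩ := exists_mulVec_eq_zero_iff.2 hdet
  set p := ofFn (n + 1) v
  have hp : p ≠ 0 := fun h0 => hv (injective_ofFn _ (h0.trans (map_zero _).symm))
  have hroots : #p.roots.toFinset ≤ n := (Multiset.toFinset_card_le _).trans
    ((card_roots' p).trans (Nat.lt_succ_iff.1 (ofFn_natDegree_lt (by omega) v)))
  set S : Finset ℝ := {z ∈ p.roots.toFinset ∪ {0, 1} | z ∈ Set.Icc (0 : ℝ) 1}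
  have hdisc : ∀ ν, IsMomentSeq T ν m → ∀ j, ∫ u, u ^ j ∂ν = ∑ z ∈ S, ν.real {z} * z ^ j := by
    intro ν hν j
    refine integral_eq_sum_of_ae_mem ?_ (hν.integrable_of_continuous (continuous_pow j))
    filter_upwards [hν.ae_weight_mul_eval_eq_zero h hHv, hν.ae_mem_Icc] with u hu hI
    rcases mul_eq_zero.1 hu with hw | hp0
    · rcases eq_zero_or_eq_one_of_weight_eq_zero hw with rfl | rfl <;> simp [S]
    · exact mem_filter.2 ⟨mem_union_left _ (Multiset.mem_toFinset.2 ((mem_roots hp).2 hp0)), hI⟩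
  have hcardS : #S ≤ T + 1 := calc
    #S ≤ #(p.roots.toFinset ∪ {0, 1}) := card_filter_le _ _
    _ ≤ #p.roots.toFinset + #({0, 1} : Finset ℝ) := card_union_le _ _
    _ ≤ T + 1 := by have := card_le_two (a := (0 : ℝ)) (b := 1); omega
  refine ⟨S, fun z hz => (mem_filter.1 hz).2, le_trans (card_le_card fun z hz => ?_) hroots,
    fun ν hν j => ?_⟩
  · obtain ⟨-, hz⟩ := mem_filter.1 hz
    have hatom : μ {z} ≠ 0 := fun h0 => hz (by simp [measureReal_def, h0])
    have hwp : weight a b z * p.eval z = 0 := by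
      by_contra hne
      exact hatom (measure_mono_null (Set.singleton_subset_iff.2 hne)
        (ae_iff.1 (hμ.ae_weight_mul_eval_eq_zero h hHv)))
    have hw : weight a b z ≠ 0 := right_ne_zero_of_mul hz
    simpa [hp, hw] using hwp
  · rw [hdisc ν hν j]
    refine sum_congr rfl fun z hz => congrArg (· * z ^ j) (eqOn_of_sum_mul_pow_eq
      (w := fun z => ν.real {z}) (w' := fun z => μ.real {z}) (fun i hi => ?_) hz)
    rw [← hdisc ν hν i, ← hdisc μ hμ i, hν.integral_pow (by omega), hμ.integral_pow (by omega)]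

end IsMomentSeq

theorem qlow_eq_and_qup_eq {T : ℕ} {m : Fin (T + 1) → ℝ} {x : ℝ} (hD : (Dset T m).Nonempty)
    (h : ∀ ν ∈ Dset T m, ∫ u, u ^ (T + 1) ∂ν = x) : qlow T m = x ∧ qup T m = x := by
  have himage : (fun ν : Measure ℝ => ∫ u, u ^ (T + 1) ∂ν) '' Dset T m = {x} := by
    rw [Set.image_congr h, hD.image_const]
  simp [qlow, qup, himage]

theorem hankelDet_boundary_equation (b : Bool) {T t : ℕ} {m : Fin (T + 1) → ℝ} {μ : Measure ℝ}
    (hμ : IsMomentSeq T μ m) (ht : 1 ≤ t) (htT : t ≤ T) (hdet : hankelDet b t (toFun m) = 0)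
    (hmin : ∀ t', 1 ≤ t' → t' < t → hankelDet b t' (toFun m) ≠ 0) :
    qlow T m = qup T m ∧ ∀ q : ℝ,
      hankelDet b t (fun k => if k < t then toFun m (T - t + 1 + k) else q) = 0 ↔ q = qlow T m := by
  set a := (t - b.toNat) % 2
  set n := (t - b.toNat) / 2
  have hb := Bool.toNat_le b
  have hat : a + 2 * n + b.toNat = t := by omega
  obtain ⟨S, hSI, hcard, hmom⟩ := hμ.exists_finset_integral_pow_eq (by omega) (by omega) hdet
  have hF : ∀ k ≤ T, toFun m k = ∑ z ∈ S, μ.real {z} * z ^ k := fun k hk =>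
    (hμ.integral_pow hk).symm.trans (hmom μ hμ k)
  obtain ⟨hqlow, hqup⟩ := qlow_eq_and_qup_eq ⟨μ, hμ⟩ fun ν hν => hmom ν hν (T + 1)
  refine ⟨hqlow.trans hqup.symm, fun q => ?_⟩
  set s := T - t + 1
  have hcard_eq : #{z ∈ S | μ.real {z} * z ^ s * weight a b z ≠ 0} = n := by
    refine le_antisymm ((card_le_card (monotone_filter_right _ fun z _ hne h0 =>
      hne (by rw [mul_right_comm, h0, zero_mul]))).trans hcard) ?_
    rcases Nat.eq_zero_or_pos n with hn | hn
    · omega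
    -- the nonvanishing determinant of order `t - 1` forces at least `n` atoms away from `0`
    have hprev := hmin (t - 1) (by omega) (by omega)
    rw [hankelDet, hankel_weightedMoments_congr (g := fun k => ∑ z ∈ S, μ.real {z} * z ^ k)
      fun k hk => hF k (by omega), weightedMoments_sum] at hprev
    have := (not_lt.1 (mt det_hankel_sum_eq_zero hprev)).trans
      (card_filter_weight_le S (fun z => μ.real {z}) (a := a) b (s := s) (by omega))
    omega
  have key := det_hankel_weightedMoments_eq_zero_iff (S := S) (c := fun z => μ.real {z} * z ^ s)
    (g := fun k => if k < t then toFun m (T - t + 1 + k) else q) (a := a) (n := n) (b := b)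
    (fun k hk => by
      rw [if_pos (hat ▸ hk), hF _ (by omega)]
      exact sum_congr rfl fun z _ => by rw [mul_assoc, ← pow_add])
    (fun z hz => mul_nonneg (mul_nonneg measureReal_nonneg (pow_nonneg (hSI z hz).1 _))
      (weight_nonneg (hSI z hz)))
    hcard_eq
  rw [hankelDet, key, hat, if_neg (lt_irrefl t), hqlow]
  simp only [mul_assoc, ← pow_add, show s + t = T + 1 by omega]

/-- Boundary case, identification of the next moment: with
`T' = min{t ∈ {1,…,T} : H̲_t(m) H̄_t(m) = 0}` and `q = q̲_T(m) = q̄_T(m)`, the value `q` is the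
unique real solution of `H̲_{T'}(m_{T-T'+1}, …, m_T, q) = 0` when `H̲_{T'}(m) = 0`, and the
unique real solution of `H̄_{T'}(m_{T-T'+1}, …, m_T, q) = 0` when `H̄_{T'}(m) = 0`. -/
theorem hankel_boundary_equation (T : ℕ) (hT : 1 ≤ T) (m : Fin (T + 1) → ℝ)
    (hm : m ∈ momSpace T) (hzero : Hlow T (toFun m) * Hup T (toFun m) = 0)
    (T' : ℕ) (hT' : T' = sInf {t : ℕ | 1 ≤ t ∧ t ≤ T ∧ Hlow t (toFun m) * Hup t (toFun m) = 0}) :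
    qlow T m = qup T m ∧
    (Hlow T' (toFun m) = 0 →
      ∀ q : ℝ,
        Hlow T' (fun n => if n < T' then toFun m (T - T' + 1 + n) else q) = 0 ↔ q = qlow T m) ∧
    (Hup T' (toFun m) = 0 →
      ∀ q : ℝ,
        Hup T' (fun n => if n < T' then toFun m (T - T' + 1 + n) else q) = 0 ↔ q = qlow T m) := by
  obtain ⟨μ, hμ⟩ := hm
  set E := {t : ℕ | 1 ≤ t ∧ t ≤ T ∧ Hlow t (toFun m) * Hup t (toFun m) = 0}
  obtain ⟨hT'1, hT'T, hT'0⟩ : T' ∈ E := hT' ▸ Nat.sInf_mem ⟨T, hT, le_rfl, hzero⟩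
  have hmin : ∀ t, 1 ≤ t → t < T' → Hlow t (toFun m) ≠ 0 ∧ Hup t (toFun m) ≠ 0 :=
    fun t ht htT' => mul_ne_zero_iff.1 fun h =>
      (hT' ▸ Nat.sInf_le (⟨ht, by omega, h⟩ : t ∈ E) : T' ≤ t).not_gt htT'
  have hlow := fun h => hankelDet_boundary_equation false hμ hT'1 hT'T h
    fun t ht htT' => Hlow_eq_hankelDet t _ ▸ (hmin t ht htT').1
  have hup := fun h => hankelDet_boundary_equation true hμ hT'1 hT'T h
    fun t ht htT' => Hup_eq_hankelDet ht _ ▸ (hmin t ht htT').2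
  simp only [Hlow_eq_hankelDet, Hup_eq_hankelDet hT'1] at hT'0 ⊢
  refine ⟨?_, fun h => (hlow h).2, fun h => (hup h).2⟩
  rcases mul_eq_zero.1 hT'0 with h | h
  exacts [(hlow h).1, (hup h).1]
end

section
/- Let α ∈ (0,1). The map x ↦ q_α(x) − x is decreasing on [0,∞), equals z_{1−α/2} at x = 0, and converges to z_{1−α} as x → ∞. -/
open MeasureTheory ProbabilityTheory

/-- The standard normal cumulative distribution function `Φ`. -/
noncomputable def Phi (x : ℝ) : ℝ := (gaussianReal 0 1 (Set.Iic x)).toReal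

open Filter

/-!
Write `g(x) = q_α(x) - x`. Since `-q_α(x) - x = -g(x) - 2x`, the defining equation reads
`Φ(g(x)) = 1 - α + Φ(-g(x) - 2x)`. If `g` increased from `x` to `y > x`, the left side would
increase while the right side decreases, so `g` is antitone. Dropping the second term gives
`Φ(g(x)) ≥ 1 - α = Φ(z_{1-α})`, and bounding the second term by
`Φ(-z_{1-α} - 2x) → 0` gives the limit.
At `x = 0` the symmetry `Φ(-q) = 1 - Φ(q)` turns the equation into `Φ(q_α(0)) = 1 - α/2`.
-/

section SubReflectEq

variable {ι : Type*} {F : ℝ → ℝ} {g h : ι → ℝ} {c : ℝ}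

theorem antitone_of_forall_sub_eq [Preorder ι] (hF : StrictMono F) (hh : Monotone h)
    (hg : ∀ x, F (g x) - F (-g x - h x) = c) : Antitone g := by
  intro x y hxy
  by_contra! hlt
  have hleft : F (g x) < F (g y) := hF hlt
  have hright : F (-g y - h y) ≤ F (-g x - h x) :=
    hF.monotone (by linarith [hh hxy])
  linarith [hg x, hg y]

theorem le_of_sub_eq (hF : StrictMono F) (hF0 : ∀ t, 0 ≤ F t) {z y w : ℝ} (hz : F z = c)
    (hyw : F y - F w = c) : z ≤ y :=
  hF.le_iff_le.1 (by linarith [hF0 w])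

theorem tendsto_of_forall_sub_eq {l : Filter ι} (hF : StrictMono F) (hF0 : ∀ t, 0 ≤ F t)
    (hF_bot : Tendsto F atBot (nhds 0)) (hh : Tendsto h l atTop)
    (hg : ∀ x, F (g x) - F (-g x - h x) = c) {z : ℝ} (hz : F z = c) :
    Tendsto g l (nhds z) := by
  have hlow : ∀ x, z ≤ g x := fun x => le_of_sub_eq hF hF0 hz (hg x)
  rw [tendsto_order]
  refine ⟨fun a ha => Eventually.of_forall fun x => ha.trans_le (hlow x), fun a ha => ?_⟩
  have hbound : Tendsto (fun x => F (-z - h x)) l (nhds 0) :=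
    hF_bot.comp (tendsto_atBot_add_const_left _ _ (tendsto_neg_atTop_atBot.comp hh))
  filter_upwards [hbound.eventually_lt_const (sub_pos.2 (hF ha))] with x hx
  have htail : F (-g x - h x) ≤ F (-z - h x) := hF.monotone (by linarith [hlow x])
  exact hF.lt_iff_lt.1 (by linarith [hg x])

end SubReflectEq

theorem Phi_eq_cdf : Phi = cdf (gaussianReal 0 1) := by
  funext x
  rw [cdf_eq_real, measureReal_def, Phi]

theorem strictMono_Phi : StrictMono Phi := by
  intro x y hxy
  have hIoc : ENNReal.ofReal (Phi y - Phi x) = gaussianReal 0 1 (Set.Ioc x y) := by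
    rw [Phi_eq_cdf, ← StieltjesFunction.measure_Ioc, measure_cdf]
  have hpos : gaussianReal 0 1 (Set.Ioc x y) ≠ 0 := fun h0 =>
    hxy.not_ge (by simpa using gaussianReal_absolutelyContinuous' 0 one_ne_zero h0)
  rw [← hIoc, Ne, ENNReal.ofReal_eq_zero, not_le] at hpos
  linarith

theorem Phi_nonneg (x : ℝ) : 0 ≤ Phi x := by
  rw [Phi_eq_cdf]
  exact cdf_nonneg _ _

theorem tendsto_Phi_atBot : Tendsto Phi atBot (nhds 0) := by
  rw [Phi_eq_cdf]
  exact tendsto_cdf_atBot _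

theorem Phi_neg (x : ℝ) : Phi (-x) = 1 - Phi x := by
  have : NullSingletonClass (gaussianReal 0 1) := nullSingletonClass_gaussianReal one_ne_zero
  have hsymm : gaussianReal 0 1 (Set.Iic (-x)) = gaussianReal 0 1 (Set.Ioi x) := by
    conv_lhs => rw [← neg_zero, ← gaussianReal_map_neg]
    rw [Measure.map_apply measurable_neg measurableSet_Iic, Set.neg_preimage, Set.neg_Iic, neg_neg,
      measure_congr Ioi_ae_eq_Ici]
  rw [Phi, Phi, hsymm, ← Set.compl_Iic, ← measureReal_def, ← measureReal_def,
    probReal_compl_eq_one_sub measurableSet_Iic]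

theorem quantile_abs_normal_gap_antitone_general (α : ℝ)
    (qa : ℝ → ℝ)
    (hqa : ∀ b : ℝ, 0 ≤ qa b ∧ Phi (qa b - b) - Phi (-qa b - b) = 1 - α)
    (z₁ z₂ : ℝ) (hz₁ : Phi z₁ = 1 - α) (hz₂ : Phi z₂ = 1 - α / 2) :
    AntitoneOn (fun x => qa x - x) (Set.Ici (0 : ℝ)) ∧
    qa 0 - 0 = z₂ ∧
    Tendsto (fun x => qa x - x) atTop (nhds z₁) := by
  have hgap : ∀ x, Phi (qa x - x) - Phi (-(qa x - x) - 2 * x) = 1 - α := fun x => by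
    rw [show -(qa x - x) - 2 * x = -qa x - x by ring]
    exact (hqa x).2
  refine ⟨(antitone_of_forall_sub_eq strictMono_Phi (monotone_id.const_mul zero_le_two)
    hgap).antitoneOn _, ?_, tendsto_of_forall_sub_eq strictMono_Phi Phi_nonneg
    tendsto_Phi_atBot (tendsto_id.const_mul_atTop two_pos) hgap hz₁⟩
  have h0 := (hqa 0).2
  rw [sub_zero, sub_zero, Phi_neg] at h0
  rw [sub_zero]
  exact strictMono_Phi.injective (by linarith)

/-- The map `x ↦ q_α(x) - x` is decreasing on `[0,∞)`, equals `z_{1-α/2}` at `x = 0`, and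
converges to `z_{1-α}` as `x → ∞`, where `z_p = Φ⁻¹(p)` and `q_α(x)` is the `(1-α)`-quantile
of `|Z + x|` for `Z` standard normal. -/
theorem quantile_abs_normal_gap_antitone (α : ℝ) (hα : α ∈ Set.Ioo (0 : ℝ) 1)
    (qa : ℝ → ℝ)
    (hqa : ∀ b : ℝ, 0 ≤ qa b ∧ Phi (qa b - b) - Phi (-qa b - b) = 1 - α)
    (z₁ z₂ : ℝ) (hz₁ : Phi z₁ = 1 - α) (hz₂ : Phi z₂ = 1 - α / 2) :
    AntitoneOn (fun x => qa x - x) (Set.Ici (0 : ℝ)) ∧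
    qa 0 - 0 = z₂ ∧
    Tendsto (fun x => qa x - x) atTop (nhds z₁) :=
  quantile_abs_normal_gap_antitone_general α qa hqa z₁ z₂ hz₁ hz₂
end
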